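/- Let S = {A ∈ M_n(k) : A_{ij} ∈ p^{ν_{ij}}} with ν_{ii} = 0. Then S is an O-order in M_n(k) if and only if ν is reduced, i.e., every defining hyperplane x_i − x_j = ν_{ij} of the polytope C(ν) contains an integer point of C(ν). -/

import Mathlib

noncomputable section

/-- The fractional ideal `p^ν = π^ν O` inside `k`. -/
def pset (O : Type*) [CommRing O] {k : Type*} [Field k] [Algebra O k] (π : k) (ν : ℤ) :
    Set k := {x : k | ∃ c : O, x = algebraMap O k c * π ^ ν}

/-- An `O`-order in `M_n(k)`: a subalgebra which is finitely generated as an `O`-module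
and is a full lattice (every matrix has a nonzero `O`-multiple in it). -/
def IsOrder (O : Type*) [CommRing O] {k : Type*} [Field k] [Algebra O k] {n : ℕ}
    (S : Subalgebra O (Matrix (Fin n) (Fin n) k)) : Prop :=
  (Subalgebra.toSubmodule S).FG ∧
    ∀ A : Matrix (Fin n) (Fin n) k, ∃ c : O, c ≠ 0 ∧ algebraMap O k c • A ∈ S

/-- A subset of `M_n(k)` is an `O`-order if it is the underlying set of an order. -/
def IsOrderSet (O : Type*) [CommRing O] {k : Type*} [Field k] [Algebra O k] {n : ℕ}
    (s : Set (Matrix (Fin n) (Fin n) k)) : Prop :=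
  ∃ S : Subalgebra O (Matrix (Fin n) (Fin n) k),
    (S : Set (Matrix (Fin n) (Fin n) k)) = s ∧ IsOrder O S

/-- The maximal order `Λ(m₁,…,m_n) = {A : A_{ij} ∈ p^{m_i - m_j}}`. -/
def Lam (O : Type*) [CommRing O] {k : Type*} [Field k] [Algebra O k] {n : ℕ} (π : k)
    (m : Fin n → ℤ) : Set (Matrix (Fin n) (Fin n) k) :=
  {A | ∀ i j, A i j ∈ pset O π (m i - m j)}

/-- A maximal `O`-order. -/
def IsMaximalOrder (O : Type*) [CommRing O] {k : Type*} [Field k] [Algebra O k] {n : ℕ}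
    (S : Subalgebra O (Matrix (Fin n) (Fin n) k)) : Prop :=
  IsOrder O S ∧ ∀ T : Subalgebra O (Matrix (Fin n) (Fin n) k), IsOrder O T → S ≤ T → T = S

/-- `m` is an integer point of the convex polytope `C(ν)` (in the hyperplane `x₁ = 0`). -/
def IntPt {n : ℕ} [NeZero n] (ν : Matrix (Fin n) (Fin n) ℤ) (m : Fin n → ℤ) : Prop :=
  m 0 = 0 ∧ ∀ i j, -ν j i ≤ m i - m j ∧ m i - m j ≤ ν i j

/-- `ν` is reduced: `C(ν)` contains an integer point and every bounding hyperplane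
`x_i - x_j = ν_{ij}` contains an integer point of `C(ν)`. -/
def Reduced {n : ℕ} [NeZero n] (ν : Matrix (Fin n) (Fin n) ℤ) : Prop :=
  (∃ m, IntPt ν m) ∧ ∀ i j, ∃ m, IntPt ν m ∧ m i - m j = ν i j

/-!
Both conditions are equivalent to the triangle inequality `ν i l ≤ ν i j + ν j l`.

The lattice `S = (p^{ν_ij})` is always finitely generated and full, so it is an order exactly when
it is closed under multiplication. Testing closure on
`π^{ν_ij} E_ij · π^{ν_jl} E_jl = π^{ν_ij + ν_jl} E_il` gives the triangle inequality;
conversely, the inequality puts every term `A_ij B_jl` of `(AB)_il` into `p^{ν_il}`.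

An integer point of `C(ν)` on the hyperplane `x_i - x_l = ν_il` gives the triangle inequality by
adding the constraints for `(i, j)` and `(j, l)`. Conversely, the normalized `j`-th column
`x_l = ν_lj - ν_0j` of `ν` is an integer point of `C(ν)` on the hyperplane `x_i - x_j = ν_ij`.
-/

section

variable {O k : Type*} [CommRing O] [Field k] [Algebra O k]

theorem pset_eq_span (π : k) (e : ℤ) : pset O π e = Submodule.span O {π ^ e} := by
  ext x
  simp only [pset, Set.mem_ofPred_eq, SetLike.mem_coe, Submodule.mem_span_singleton,
    Algebra.smul_def, eq_comm]

theorem zpow_mem_pset (π : k) (e : ℤ) : π ^ e ∈ pset O π e := ⟨1, by simp⟩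

theorem mul_mem_pset {π x y : k} {a b : ℤ} (hπ : π ≠ 0) (hx : x ∈ pset O π a)
    (hy : y ∈ pset O π b) : x * y ∈ pset O π (a + b) := by
  obtain ⟨c, rfl⟩ := hx
  obtain ⟨d, rfl⟩ := hy
  exact ⟨c * d, by rw [map_mul, zpow_add₀ hπ]; ring⟩

theorem pset_anti {ϖ : O} (hϖ : algebraMap O k ϖ ≠ 0) {a b : ℤ} (h : b ≤ a) :
    pset O (algebraMap O k ϖ) a ⊆ pset O (algebraMap O k ϖ) b := by
  rintro _ ⟨c, rfl⟩
  obtain ⟨m, hm⟩ := Int.eq_ofNat_of_zero_le (sub_nonneg.2 h)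
  refine ⟨c * ϖ ^ m, ?_⟩
  rw [show a = m + b by omega, zpow_add₀ hϖ, zpow_natCast, map_mul, map_pow, mul_assoc]

theorem zpow_mem_pset_iff [FaithfulSMul O k] {ϖ : O} (hϖ : Irreducible ϖ) {a b : ℤ} :
    algebraMap O k ϖ ^ a ∈ pset O (algebraMap O k ϖ) b ↔ b ≤ a := by
  have hπ : algebraMap O k ϖ ≠ 0 := (FaithfulSMul.algebraMap_eq_zero_iff O k).not.2 hϖ.ne_zero
  refine ⟨fun ⟨c, hc⟩ => ?_, fun h => pset_anti hπ h (zpow_mem_pset _ a)⟩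
  by_contra! hab
  obtain ⟨m, hm⟩ := Int.eq_ofNat_of_zero_le (sub_nonneg.2 hab.le)
  have hc_mul : c * ϖ ^ m = 1 := by
    apply FaithfulSMul.algebraMap_injective O k
    rw [map_mul, map_pow, map_one, ← zpow_natCast, ← hm, zpow_sub₀ hπ, ← mul_div_assoc, ← hc,
      div_self (zpow_ne_zero _ hπ)]
  have hm0 : m ≠ 0 := by omega
  exact hϖ.not_isUnit ((isUnit_pow_iff hm0).1 (.of_mul_eq_one_right c hc_mul))

variable {n : ℕ}

variable (O) in
def matrixLattice (π : k) (ν : Matrix (Fin n) (Fin n) ℤ) :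
    Submodule O (Matrix (Fin n) (Fin n) k) :=
  Submodule.pi Set.univ fun i => Submodule.pi Set.univ fun j => Submodule.span O {π ^ ν i j}

theorem mem_matrixLattice {π : k} {ν : Matrix (Fin n) (Fin n) ℤ} {A : Matrix (Fin n) (Fin n) k} :
    A ∈ matrixLattice O π ν ↔ ∀ i j, A i j ∈ pset O π (ν i j) := by
  simp only [pset_eq_span, SetLike.mem_coe]
  exact ⟨fun h i j => h i trivial j trivial, fun h i _ j _ => h i j⟩

theorem coe_matrixLattice (π : k) (ν : Matrix (Fin n) (Fin n) ℤ) :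
    (matrixLattice O π ν : Set (Matrix (Fin n) (Fin n) k)) =
      {A | ∀ i j, A i j ∈ pset O π (ν i j)} :=
  Set.ext fun _ => mem_matrixLattice

theorem matrixLattice_fg (π : k) (ν : Matrix (Fin n) (Fin n) ℤ) : (matrixLattice O π ν).FG :=
  Submodule.fg_pi fun _ => Submodule.fg_pi fun _ => Submodule.fg_span_singleton _

theorem single_mem_matrixLattice {π x : k} {ν : Matrix (Fin n) (Fin n) ℤ} {i j : Fin n}
    (hx : x ∈ pset O π (ν i j)) : Matrix.single i j x ∈ matrixLattice O π ν := by
  refine mem_matrixLattice.2 fun a b => ?_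
  by_cases hab : i = a ∧ j = b
  · obtain ⟨rfl, rfl⟩ := hab
    rwa [Matrix.single_apply_same]
  · exact ⟨0, by simp [Matrix.single_apply_of_ne (h := hab)]⟩

theorem one_mem_matrixLattice (π : k) {ν : Matrix (Fin n) (Fin n) ℤ} (hdiag : ∀ i, ν i i = 0) :
    1 ∈ matrixLattice O π ν := by
  refine mem_matrixLattice.2 fun i j => ?_
  rcases eq_or_ne i j with rfl | hij
  · exact ⟨1, by simp [hdiag]⟩
  · exact ⟨0, by simp [hij]⟩

theorem mul_mem_matrixLattice {ϖ : O} (hϖ : algebraMap O k ϖ ≠ 0)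
    {ν : Matrix (Fin n) (Fin n) ℤ} (htri : ∀ i j l, ν i l ≤ ν i j + ν j l)
    {A B : Matrix (Fin n) (Fin n) k} (hA : A ∈ matrixLattice O (algebraMap O k ϖ) ν)
    (hB : B ∈ matrixLattice O (algebraMap O k ϖ) ν) :
    A * B ∈ matrixLattice O (algebraMap O k ϖ) ν := by
  refine mem_matrixLattice.2 fun i l => ?_
  rw [Matrix.mul_apply, pset_eq_span]
  refine Submodule.sum_mem _ fun j _ => ?_
  rw [← SetLike.mem_coe, ← pset_eq_span]
  exact pset_anti hϖ (htri i j l)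
    (mul_mem_pset hϖ (mem_matrixLattice.1 hA i j) (mem_matrixLattice.1 hB j l))

theorem exists_smul_mem_matrixLattice [IsDomain O] [IsFractionRing O k] {ϖ : O} (hϖ : ϖ ≠ 0)
    (ν : Matrix (Fin n) (Fin n) ℤ) (A : Matrix (Fin n) (Fin n) k) :
    ∃ c : O, c ≠ 0 ∧ algebraMap O k c • A ∈ matrixLattice O (algebraMap O k ϖ) ν := by
  obtain ⟨b, hb⟩ := IsLocalization.exist_integer_multiples_of_finite (nonZeroDivisors O)
    fun p : Fin n × Fin n => A p.1 p.2
  obtain ⟨N, hN⟩ := (Set.finite_range fun p : Fin n × Fin n => ν p.1 p.2).bddAbove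
  have hπ : algebraMap O k ϖ ≠ 0 := (FaithfulSMul.algebraMap_eq_zero_iff O k).not.2 hϖ
  refine ⟨ϖ ^ N.toNat * b, mul_ne_zero (pow_ne_zero _ hϖ) (nonZeroDivisors.ne_zero b.2),
    mem_matrixLattice.2 fun i j => ?_⟩
  obtain ⟨a, ha⟩ := hb (i, j)
  have hle : ν i j ≤ N.toNat := (hN ⟨(i, j), rfl⟩).trans (Int.self_le_toNat N)
  refine pset_anti hπ hle ⟨a, ?_⟩
  rw [Matrix.smul_apply, smul_eq_mul, map_mul, map_pow, zpow_natCast, mul_assoc, ha,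
    Algebra.smul_def, mul_comm]

theorem le_add_of_mul_mem_matrixLattice [FaithfulSMul O k] {ϖ : O} (hϖ : Irreducible ϖ)
    {ν : Matrix (Fin n) (Fin n) ℤ}
    (hmul : ∀ A ∈ matrixLattice O (algebraMap O k ϖ) ν, ∀ B ∈ matrixLattice O (algebraMap O k ϖ) ν,
      A * B ∈ matrixLattice O (algebraMap O k ϖ) ν)
    (i j l : Fin n) : ν i l ≤ ν i j + ν j l := by
  set π := algebraMap O k ϖ
  have hπ : π ≠ 0 := (FaithfulSMul.algebraMap_eq_zero_iff O k).not.2 hϖ.ne_zero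
  have hprod := hmul _ (single_mem_matrixLattice (zpow_mem_pset π (ν i j)))
    _ (single_mem_matrixLattice (zpow_mem_pset π (ν j l)))
  rw [Matrix.single_mul_single_same, ← zpow_add₀ hπ] at hprod
  have := mem_matrixLattice.1 hprod i l
  rwa [Matrix.single_apply_same, zpow_mem_pset_iff hϖ] at this

theorem isOrderSet_matrixLattice_iff [IsDomain O] [IsFractionRing O k] {ϖ : O}
    (hϖ : Irreducible ϖ) {ν : Matrix (Fin n) (Fin n) ℤ} (hdiag : ∀ i, ν i i = 0) :
    IsOrderSet O (matrixLattice O (algebraMap O k ϖ) ν : Set (Matrix (Fin n) (Fin n) k)) ↔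
      ∀ i j l, ν i l ≤ ν i j + ν j l := by
  constructor
  · rintro ⟨S, hS, -⟩
    refine le_add_of_mul_mem_matrixLattice (k := k) hϖ fun A hA B hB => ?_
    rw [← SetLike.mem_coe, ← hS] at hA hB ⊢
    exact S.mul_mem hA hB
  · intro htri
    have hπ : algebraMap O k ϖ ≠ 0 := (FaithfulSMul.algebraMap_eq_zero_iff O k).not.2 hϖ.ne_zero
    exact ⟨(matrixLattice O _ ν).toSubalgebra (one_mem_matrixLattice _ hdiag)
      fun _ _ => mul_mem_matrixLattice hπ htri, rfl, matrixLattice_fg _ ν,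
      exists_smul_mem_matrixLattice hϖ.ne_zero ν⟩

section Reduced

variable [NeZero n] {ν : Matrix (Fin n) (Fin n) ℤ}

theorem intPt_sub_col (htri : ∀ i j l, ν i l ≤ ν i j + ν j l) (j : Fin n) :
    IntPt ν fun l => ν l j - ν 0 j :=
  ⟨sub_self _, fun a b => ⟨by linarith [htri b a j], by linarith [htri a b j]⟩⟩

theorem reduced_iff_forall_le_add (hdiag : ∀ i, ν i i = 0) :
    Reduced ν ↔ ∀ i j l, ν i l ≤ ν i j + ν j l := by
  refine ⟨fun h i j l => ?_, fun htri => ⟨⟨_, intPt_sub_col htri 0⟩, fun i j =>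
    ⟨_, intPt_sub_col htri j, by simp [hdiag]⟩⟩⟩
  obtain ⟨m, hm, him⟩ := h.2 i l
  linarith [(hm.2 i j).2, (hm.2 j l).2]

end Reduced

end

theorem stmt12_general {n : ℕ} [NeZero n] {O : Type*} [CommRing O] [IsDomain O]
{k : Type*} [Field k] [Algebra O k] [IsFractionRing O k]
    (ϖ : O) (hϖ : Irreducible ϖ) (π : k) (hπ : π = algebraMap O k ϖ)
    (ν : Matrix (Fin n) (Fin n) ℤ) (hdiag : ∀ i, ν i i = 0) :
    IsOrderSet O {A : Matrix (Fin n) (Fin n) k | ∀ i j, A i j ∈ pset O π (ν i j)} ↔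
      Reduced ν := by
  subst hπ
  rw [← coe_matrixLattice, isOrderSet_matrixLattice_iff hϖ hdiag, reduced_iff_forall_le_add hdiag]

/-- `S = (p^{ν_{ij}})` is an `O`-order iff `ν` is reduced. -/
theorem stmt12 {n : ℕ} [NeZero n] {O : Type*} [CommRing O] [IsDomain O] [IsDiscreteValuationRing O]
{k : Type*} [Field k] [Algebra O k] [IsFractionRing O k]
    (ϖ : O) (hϖ : Irreducible ϖ) (π : k) (hπ : π = algebraMap O k ϖ)
    (ν : Matrix (Fin n) (Fin n) ℤ) (hdiag : ∀ i, ν i i = 0)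
    (hsym : ∀ i j, 0 ≤ ν i j + ν j i) :
    IsOrderSet O {A : Matrix (Fin n) (Fin n) k | ∀ i j, A i j ∈ pset O π (ν i j)} ↔
      Reduced ν :=
  stmt12_general ϖ hϖ π hπ ν hdiag
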